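/- Let H_1,...,H_m and G_1,...,G_p be real Hilbert spaces. For each k ∈ {1,...,p}, let β_k > 0, let T_k : G_k → G_k be β_k-cocoercive, and for each i ∈ {1,...,m} let L_{ki} : H_i → G_k be a bounded linear operator. Assume min_{1≤k≤p} Σ_{i=1}^m ‖L_{ki}‖² > 0 and define B_i : H_1 × ... × H_m → H_i by B_i(x_1,...,x_m) = Σ_{k=1}^p L_{ki}* T_k( Σ_{j=1}^m L_{kj} x_j ). Then the family (B_i)_{1≤i≤m} satisfies the joint cocoercivity inequality with constant β = (1/p) · min_{1≤k≤p} β_k / ( Σ_{i=1}^m ‖L_{ki}‖² ). -/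

import Mathlib

/-!
Write `Δ_k = Σ_j L_{kj}(x_j - y_j)` and `D_k = T_k(Σ_j L_{kj} x_j) - T_k(Σ_j L_{kj} y_j)`, so that
`B_i x - B_i y = Σ_k L_{ki}* D_k`. By adjointness the right-hand side equals `Σ_k ⟪Δ_k, D_k⟫`,
which cocoercivity bounds below by `Σ_k β_k ‖D_k‖²`. On the other side, the triangle inequality,
`‖L_{ki}*‖ = ‖L_{ki}‖` and Cauchy–Schwarz over the `p` indices `k` give
`Σ_i ‖B_i x - B_i y‖² ≤ p Σ_k (Σ_i ‖L_{ki}‖²) ‖D_k‖²`, and `β p Σ_i ‖L_{ki}‖² ≤ β_k` for every `k`.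
-/

open scoped RealInnerProductSpace
open Finset ContinuousLinearMap

section AdjointCoupling

variable {ι κ : Type*} [Fintype κ]
  {H : ι → Type*} [∀ i, NormedAddCommGroup (H i)] [∀ i, InnerProductSpace ℝ (H i)]
  [∀ i, CompleteSpace (H i)]
  {G : κ → Type*} [∀ k, NormedAddCommGroup (G k)] [∀ k, InnerProductSpace ℝ (G k)]
  [∀ k, CompleteSpace (G k)]
  (L : ∀ k i, H i →L[ℝ] G k)

theorem norm_sum_adjoint_apply_sq_le (d : ∀ k, G k) (i : ι) :
    ‖∑ k, adjoint (L k i) (d k)‖ ^ 2 ≤ Fintype.card κ * ∑ k, ‖L k i‖ ^ 2 * ‖d k‖ ^ 2 := by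
  have htriangle : ‖∑ k, adjoint (L k i) (d k)‖ ≤ ∑ k, ‖L k i‖ * ‖d k‖ := by
    refine (norm_sum_le _ _).trans (sum_le_sum fun k _ => ?_)
    simpa only [LinearIsometryEquiv.norm_map] using (adjoint (L k i)).le_opNorm (d k)
  calc ‖∑ k, adjoint (L k i) (d k)‖ ^ 2 ≤ (∑ k, ‖L k i‖ * ‖d k‖) ^ 2 := by gcongr
    _ ≤ Fintype.card κ * ∑ k, (‖L k i‖ * ‖d k‖) ^ 2 := sq_sum_le_card_mul_sum_sq
    _ = Fintype.card κ * ∑ k, ‖L k i‖ ^ 2 * ‖d k‖ ^ 2 := by simp only [mul_pow]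

variable [Fintype ι]

theorem sum_inner_sum_adjoint_apply (d : ∀ k, G k) (u : ∀ i, H i) :
    ∑ i, ⟪∑ k, adjoint (L k i) (d k), u i⟫ = ∑ k, ⟪∑ i, L k i (u i), d k⟫ := by
  simp only [sum_inner, inner_sum, adjoint_inner_left, real_inner_comm (d _)]
  exact sum_comm

theorem sum_norm_sum_adjoint_apply_sq_le (d : ∀ k, G k) :
    ∑ i, ‖∑ k, adjoint (L k i) (d k)‖ ^ 2 ≤
      Fintype.card κ * ∑ k, (∑ i, ‖L k i‖ ^ 2) * ‖d k‖ ^ 2 := by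
  calc ∑ i, ‖∑ k, adjoint (L k i) (d k)‖ ^ 2
      ≤ ∑ i, Fintype.card κ * ∑ k, ‖L k i‖ ^ 2 * ‖d k‖ ^ 2 :=
        sum_le_sum fun i _ => norm_sum_adjoint_apply_sq_le L d i
    _ = Fintype.card κ * ∑ k, (∑ i, ‖L k i‖ ^ 2) * ‖d k‖ ^ 2 := by
        rw [← mul_sum, sum_comm]
        simp only [sum_mul]

end AdjointCoupling

theorem nonlinear_coupling_cocoercive_general {m p : ℕ} (hp : 0 < p)
    (H : Fin m → Type*) [∀ i, NormedAddCommGroup (H i)]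
    [∀ i, InnerProductSpace ℝ (H i)] [∀ i, CompleteSpace (H i)]
    (G : Fin p → Type*) [∀ k, NormedAddCommGroup (G k)]
    [∀ k, InnerProductSpace ℝ (G k)] [∀ k, CompleteSpace (G k)]
    (βk : Fin p → ℝ) (hβk : ∀ k, 0 < βk k)
    (T : ∀ k, G k → G k)
    -- each `T_k` is `β_k`-cocoercive
    (hT : ∀ k, ∀ u v : G k, βk k * ‖T k u - T k v‖ ^ 2 ≤ ⟪u - v, T k u - T k v⟫)
    (L : ∀ (k : Fin p) (i : Fin m), H i →L[ℝ] G k)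
    (B : ∀ i : Fin m, (∀ j, H j) → H i)
    (hB : ∀ i (x : ∀ j, H j),
      B i x = ∑ k, ContinuousLinearMap.adjoint (L k i) (T k (∑ j, L k j (x j))))
    (β : ℝ)
    (hβ : β = (1 / p) * Finset.univ.inf' ⟨⟨0, hp⟩, Finset.mem_univ _⟩
        (fun k => βk k / ∑ i, ‖L k i‖ ^ 2)) :
    ∀ x y : ∀ j, H j,
      β * ∑ i, ‖B i x - B i y‖ ^ 2 ≤ ∑ i, ⟪B i x - B i y, x i - y i⟫ := by
  intro x y
  set D : ∀ k, G k := fun k => T k (∑ j, L k j (x j)) - T k (∑ j, L k j (y j))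
  have hdiff : ∀ i, B i x - B i y = ∑ k, adjoint (L k i) (D k) := fun i => by
    simp only [hB, D, map_sub, sum_sub_distrib]
  have hβp : ∀ k, β * p ≤ βk k / ∑ i, ‖L k i‖ ^ 2 := fun k => by
    rw [hβ, one_div, mul_right_comm, inv_mul_cancel₀ (by exact_mod_cast hp.ne'), one_mul]
    exact inf'_le _ (mem_univ k)
  have hβ_nonneg : 0 ≤ β := by
    rw [hβ]
    refine mul_nonneg (by positivity) (le_inf' _ _ fun k _ => ?_)
    exact div_nonneg (hβk k).le (by positivity)
  calc β * ∑ i, ‖B i x - B i y‖ ^ 2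
      ≤ β * (p * ∑ k, (∑ i, ‖L k i‖ ^ 2) * ‖D k‖ ^ 2) := by
        gcongr
        simpa only [hdiff, Fintype.card_fin] using sum_norm_sum_adjoint_apply_sq_le L D
    _ = ∑ k, β * p * (∑ i, ‖L k i‖ ^ 2) * ‖D k‖ ^ 2 := by
        rw [mul_sum, mul_sum]
        simp only [mul_assoc]
    _ ≤ ∑ k, βk k * ‖D k‖ ^ 2 := by
        gcongr with k
        exact mul_le_of_le_div₀ (hβk k).le (by positivity) (hβp k)
    _ ≤ ∑ k, ⟪∑ j, L k j (x j - y j), D k⟫ := by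
        gcongr with k
        simpa only [map_sub, sum_sub_distrib] using hT k _ _
    _ = ∑ i, ⟪B i x - B i y, x i - y i⟫ := by
        simp only [hdiff, sum_inner_sum_adjoint_apply]

/-- Proposition 3.9: if each `T_k : G_k → G_k` is `β_k`-cocoercive, then the
nonlinear coupling operators `B_i : (x_j)_j ↦ Σ_k L_{ki}* T_k(Σ_j L_{kj} x_j)`
satisfy the joint cocoercivity inequality with
`β = (1/p) min_k β_k / (Σ_i ‖L_{ki}‖²)`. -/
theorem nonlinear_coupling_cocoercive {m p : ℕ} (hp : 0 < p)
    (H : Fin m → Type*) [∀ i, NormedAddCommGroup (H i)]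
    [∀ i, InnerProductSpace ℝ (H i)] [∀ i, CompleteSpace (H i)]
    (G : Fin p → Type*) [∀ k, NormedAddCommGroup (G k)]
    [∀ k, InnerProductSpace ℝ (G k)] [∀ k, CompleteSpace (G k)]
    (βk : Fin p → ℝ) (hβk : ∀ k, 0 < βk k)
    (T : ∀ k, G k → G k)
    -- each `T_k` is `β_k`-cocoercive
    (hT : ∀ k, ∀ u v : G k, βk k * ‖T k u - T k v‖ ^ 2 ≤ ⟪u - v, T k u - T k v⟫)
    (L : ∀ (k : Fin p) (i : Fin m), H i →L[ℝ] G k)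
    -- min_k Σ_i ‖L_{ki}‖² > 0
    (hL : ∀ k, 0 < ∑ i, ‖L k i‖ ^ 2)
    (B : ∀ i : Fin m, (∀ j, H j) → H i)
    (hB : ∀ i (x : ∀ j, H j),
      B i x = ∑ k, ContinuousLinearMap.adjoint (L k i) (T k (∑ j, L k j (x j))))
    (β : ℝ)
    (hβ : β = (1 / p) * Finset.univ.inf' ⟨⟨0, hp⟩, Finset.mem_univ _⟩
        (fun k => βk k / ∑ i, ‖L k i‖ ^ 2)) :
    ∀ x y : ∀ j, H j,
      β * ∑ i, ‖B i x - B i y‖ ^ 2 ≤ ∑ i, ⟪B i x - B i y, x i - y i⟫ :=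
  nonlinear_coupling_cocoercive_general hp H G βk hβk T hT L B hB β hβ
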